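/- arXiv:1512.04644 — 9 statements merged into one kernel-verified Lean document; each statement's English description precedes it below -/
import Mathlib

section
/- Assume 0 ≤ vl_i ≤ vu_i, 0 ≤ vl_j ≤ vu_j and −π/2 ≤ θl < 0 < θu ≤ π/2. Then for all reals v_i, v_j, θ with vl_i ≤ v_i ≤ vu_i, vl_j ≤ v_j ≤ vu_j and θl ≤ θ ≤ θu, one has min(vl_i·vl_j·cos θl, vl_i·vl_j·cos θu) ≤ v_i·v_j·cos θ ≤ vu_i·vu_j and vu_i·vu_j·sin θl ≤ v_i·v_j·sin θ ≤ vu_i·vu_j·sin θu. -/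
/-!
On `[-π, π]` the cosine increases up to `0` and decreases after it, so on any subinterval it
attains its minimum at an endpoint; on `[-π/2, π/2]` it is nonnegative and the sine is monotone.
The magnitude product `vi * vj` lies in `[vli * vlj, vui * vuj] ⊆ [0, ∞)`, so each bound scales
the extreme trigonometric value by the extreme magnitude product of the matching sign:
`sin θl ≤ 0 ≤ sin θu` because `θl < 0 < θu`.
-/

open Real

theorem Real.min_cos_le_cos_of_mem_Icc {a b θ : ℝ} (ha : -π ≤ a) (hb : b ≤ π)
    (haθ : a ≤ θ) (hθb : θ ≤ b) : min (cos a) (cos b) ≤ cos θ := by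
  rcases le_total θ 0 with hθ | hθ
  · calc min (cos a) (cos b) ≤ cos (-a) := (min_le_left _ _).trans_eq (cos_neg a).symm
      _ ≤ cos (-θ) := cos_le_cos_of_nonneg_of_le_pi (by linarith) (by linarith) (by linarith)
      _ = cos θ := cos_neg θ
  · exact (min_le_right _ _).trans (cos_le_cos_of_nonneg_of_le_pi hθ hb hθb)

theorem voltage_product_bounds_mixed_angles_general
    (vli vui vlj vuj θl θu : ℝ)
    (hvli : 0 ≤ vli) (hvlj : 0 ≤ vlj)
    (hθl : -(Real.pi / 2) ≤ θl) (hθl0 : θl < 0) (hθu0 : 0 < θu) (hθu : θu ≤ Real.pi / 2) :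
    ∀ vi vj θ : ℝ, vli ≤ vi → vi ≤ vui → vlj ≤ vj → vj ≤ vuj → θl ≤ θ → θ ≤ θu →
      (min (vli * vlj * Real.cos θl) (vli * vlj * Real.cos θu) ≤ vi * vj * Real.cos θ ∧
        vi * vj * Real.cos θ ≤ vui * vuj) ∧
      (vui * vuj * Real.sin θl ≤ vi * vj * Real.sin θ ∧
        vi * vj * Real.sin θ ≤ vui * vuj * Real.sin θu) := by
  intro vi vj θ hlvi hvui hlvj hvuj hθlθ hθθu
  have hvi : 0 ≤ vi := hvli.trans hlvi
  have hvj : 0 ≤ vj := hvlj.trans hlvj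
  have hvl : 0 ≤ vli * vlj := mul_nonneg hvli hvlj
  have hv : 0 ≤ vi * vj := mul_nonneg hvi hvj
  have hvl_le : vli * vlj ≤ vi * vj := mul_le_mul hlvi hlvj hvlj hvi
  have hv_le : vi * vj ≤ vui * vuj := mul_le_mul hvui hvuj hvj (hvi.trans hvui)
  have hcos : 0 ≤ cos θ := cos_nonneg_of_mem_Icc ⟨by linarith, by linarith⟩
  have hsinl : sin θl ≤ 0 := sin_nonpos_of_nonpos_of_neg_pi_le hθl0.le (by linarith)
  have hsinu : 0 ≤ sin θu := sin_nonneg_of_nonneg_of_le_pi hθu0.le (by linarith)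
  refine ⟨⟨?_, ?_⟩, ?_, ?_⟩
  · rw [← mul_min_of_nonneg _ _ hvl]
    exact mul_le_mul_of_nonneg hvl_le
      (min_cos_le_cos_of_mem_Icc (by linarith) (by linarith) hθlθ hθθu) hvl hcos
  · simpa using mul_le_mul_of_nonneg hv_le (cos_le_one θ) hv zero_le_one
  · calc vui * vuj * sin θl ≤ vi * vj * sin θl := mul_le_mul_of_nonpos_right hv_le hsinl
      _ ≤ vi * vj * sin θ :=
        mul_le_mul_of_nonneg_left (sin_le_sin_of_le_of_le_pi_div_two hθl (by linarith) hθlθ) hv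
  · exact mul_le_mul_of_nonneg hv_le
      (sin_le_sin_of_le_of_le_pi_div_two (by linarith) hθu hθθu) hv hsinu

theorem voltage_product_bounds_mixed_angles
    (vli vui vlj vuj θl θu : ℝ)
    (hvli : 0 ≤ vli) (hvi : vli ≤ vui) (hvlj : 0 ≤ vlj) (hvj : vlj ≤ vuj)
    (hθl : -(Real.pi / 2) ≤ θl) (hθl0 : θl < 0) (hθu0 : 0 < θu) (hθu : θu ≤ Real.pi / 2) :
    ∀ vi vj θ : ℝ, vli ≤ vi → vi ≤ vui → vlj ≤ vj → vj ≤ vuj → θl ≤ θ → θ ≤ θu →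
      (min (vli * vlj * Real.cos θl) (vli * vlj * Real.cos θu) ≤ vi * vj * Real.cos θ ∧
        vi * vj * Real.cos θ ≤ vui * vuj) ∧
      (vui * vuj * Real.sin θl ≤ vi * vj * Real.sin θ ∧
        vi * vj * Real.sin θ ≤ vui * vuj * Real.sin θu) :=
  voltage_product_bounds_mixed_angles_general vli vui vlj vuj θl θu hvli hvlj hθl hθl0 hθu0 hθu
end

section
/- (Extreme cut.) For all reals v_i, v_j, θ with vl_i ≤ v_i ≤ vu_i, vl_j ≤ v_j ≤ vu_j and θl ≤ θ ≤ θu, setting w_i = v_i², wR = v_i·v_j·cos θ and wI = v_i·v_j·sin θ, the following inequality holds: vl_j·cos δ·w_i − vσ_i·cos φ·wR − vσ_i·sin φ·wI + vl_i·vu_i·vl_j·cos δ ≤ 0. -/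
/-! With `φ` and `δ` the midpoint and half-width of the angle interval, the two trigonometric
terms combine to `vσ_i · v_i · v_j · cos (θ - φ)`, and `|θ - φ| ≤ δ ≤ π/2` gives
`v_j cos (θ - φ) ≥ vl_j cos δ ≥ 0`. Writing `c = vl_j cos δ` and `y = v_j cos (θ - φ)`, the left side is
`-(vl_i + vu_i) v_i (y - c) - c (v_i - vl_i) (vu_i - v_i)`, a sum of two nonpositive terms. -/

open Real

theorem cos_le_cos_of_abs_le {x d : ℝ} (hx : |x| ≤ d) (hd : d ≤ π) : cos d ≤ cos x := by
  rw [← cos_abs x]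
  exact cos_le_cos_of_nonneg_of_le_pi (abs_nonneg x) hd hx

theorem mul_sq_sub_mul_add_mul_nonpos {a b x c y : ℝ} (ha : 0 ≤ a) (hax : a ≤ x) (hxb : x ≤ b)
    (hc : 0 ≤ c) (hcy : c ≤ y) : c * x ^ 2 - (a + b) * x * y + a * b * c ≤ 0 := by
  have hgap : 0 ≤ (a + b) * x * (y - c) :=
    mul_nonneg (mul_nonneg (by linarith) (by linarith)) (by linarith)
  have hbox : 0 ≤ c * ((x - a) * (b - x)) :=
    mul_nonneg hc (mul_nonneg (by linarith) (by linarith))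
  linear_combination hgap + hbox

theorem extreme_cut_valid_general
    (vli vui vlj vuj θl θu φ δ vσi : ℝ)
    (hvli : 0 < vli) (hvlj : 0 < vlj)
    (hθl : -(Real.pi / 2) ≤ θl) (hθu : θu ≤ Real.pi / 2)
    (hφ : φ = (θu + θl) / 2) (hδ : δ = (θu - θl) / 2) (hσi : vσi = vli + vui) :
    ∀ vi vj θ : ℝ, vli ≤ vi → vi ≤ vui → vlj ≤ vj → vj ≤ vuj → θl ≤ θ → θ ≤ θu →
      vlj * Real.cos δ * vi ^ 2 - vσi * Real.cos φ * (vi * vj * Real.cos θ)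
        - vσi * Real.sin φ * (vi * vj * Real.sin θ) + vli * vui * vlj * Real.cos δ ≤ 0 := by
  intro vi vj θ hvi_lo hvi_hi hvj_lo _ hθ_lo hθ_hi
  subst hφ hδ hσi
  have hθ_mid : |θ - (θu + θl) / 2| ≤ (θu - θl) / 2 := abs_le.2 ⟨by linarith, by linarith⟩
  have hcos_δ : 0 ≤ cos ((θu - θl) / 2) := cos_nonneg_of_mem_Icc ⟨by linarith, by linarith⟩
  have hcos_mid := cos_le_cos_of_abs_le hθ_mid (by linarith [pi_pos])
  have hc_le_y : vlj * cos ((θu - θl) / 2) ≤ vj * cos (θ - (θu + θl) / 2) :=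
    mul_le_mul hvj_lo hcos_mid hcos_δ (by linarith)
  have key := mul_sq_sub_mul_add_mul_nonpos hvli.le hvi_lo hvi_hi
    (mul_nonneg hvlj.le hcos_δ) hc_le_y
  rw [cos_sub] at key
  linear_combination key

theorem extreme_cut_valid
    (vli vui vlj vuj θl θu φ δ vσi : ℝ)
    (hvli : 0 < vli) (hvi : vli ≤ vui) (hvlj : 0 < vlj) (hvj : vlj ≤ vuj)
    (hθl : -(Real.pi / 2) ≤ θl) (hθ : θl ≤ θu) (hθu : θu ≤ Real.pi / 2)
    (hφ : φ = (θu + θl) / 2) (hδ : δ = (θu - θl) / 2) (hσi : vσi = vli + vui) :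
    ∀ vi vj θ : ℝ, vli ≤ vi → vi ≤ vui → vlj ≤ vj → vj ≤ vuj → θl ≤ θ → θ ≤ θu →
      vlj * Real.cos δ * vi ^ 2 - vσi * Real.cos φ * (vi * vj * Real.cos θ)
        - vσi * Real.sin φ * (vi * vj * Real.sin θ) + vli * vui * vlj * Real.cos δ ≤ 0 :=
  extreme_cut_valid_general vli vui vlj vuj θl θu φ δ vσi hvli hvlj hθl hθu hφ hδ hσi
end

section
/- Assume additionally −π/2 < θl ≤ θu < π/2. Let wR, wI, w_i be real numbers satisfying: (vl_i)² ≤ w_i ≤ (vu_i)², tan(θl)·wR ≤ wI ≤ tan(θu)·wR, the second-order-cone bound wR² + wI² ≤ w_i·(vu_j)², and the Extreme cut vl_j·cos δ·w_i − vσ_i·cos φ·wR − vσ_i·sin φ·wI + vl_i·vu_i·vl_j·cos δ ≤ 0. Then c11·wR + c12·wI + c13·w_i + c14·(wR² + wI²)/w_i + c15 ≥ 0, where c11 = vσ_i·vσ_j·cos φ, c12 = vσ_i·vσ_j·sin φ, c13 = −vu_j·cos δ·vσ_j, c14 = −vu_i·cos δ·vσ_i, c15 = −vu_i·vu_j·cos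 δ·(vl_i·vl_j − vu_i·vu_j). -/
/-! Write `r = √(wR² + wI²)`, `y = √wi`, `u = cos φ · wR + sin φ · wI` and `c = cos δ`.
Multiplied by `wi`, the claim reads `0 ≤ vσi vσj u y² - c (vui vσi r² + vuj vσj y⁴ + K y²)`
with `K = vui vuj (vli vlj - vui vuj)`, and this is increasing in `u` and decreasing in `r ≥ 0`.
The phase constraints put `(wR, wI)` in the sector of half-width `δ` around the direction `φ`,
so `u ≥ c r`; the Extreme cut says `u ≥ c Q / vσi` with `Q = vlj (y² + vli vui)`.
With `m = max r (Q / vσi) ≤ vuj y` it therefore suffices to treat `u = c m`, `r = m`, which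
leaves a concave quadratic in `m`: it is nonnegative at `m = vuj y` by a direct factorisation, and
at `m = Q / vσi` because there it is, as a function of `y²`, a concave quadratic vanishing at
`y = vui` and nonnegative at `y = vli`. -/

open Real

theorem bisector_proj_sq_sub_cos_sq_mul_normSq (a b x y : ℝ) :
    (cos ((a + b) / 2) * x + sin ((a + b) / 2) * y) ^ 2 - cos ((a - b) / 2) ^ 2 * (x ^ 2 + y ^ 2)
      = (sin a * x - cos a * y) * (cos b * y - sin b * x) := by
  obtain ⟨α, rfl⟩ : ∃ α, a = 2 * α := ⟨a / 2, by ring⟩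
  obtain ⟨β, rfl⟩ : ∃ β, b = 2 * β := ⟨b / 2, by ring⟩
  rw [show (2 * α + 2 * β) / 2 = α + β by ring, show (2 * α - 2 * β) / 2 = α - β by ring,
    cos_add, sin_add, cos_sub, sin_two_mul, sin_two_mul, cos_two_mul', cos_two_mul']
  ring

theorem tan_mul_le_iff {θ x y : ℝ} (h : 0 < cos θ) : tan θ * x ≤ y ↔ sin θ * x ≤ cos θ * y := by
  rw [tan_eq_sin_div_cos, div_mul_eq_mul_div, div_le_iff₀ h, mul_comm y]

theorem le_tan_mul_iff {θ x y : ℝ} (h : 0 < cos θ) : y ≤ tan θ * x ↔ cos θ * y ≤ sin θ * x := by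
  rw [tan_eq_sin_div_cos, div_mul_eq_mul_div, le_div_iff₀ h, mul_comm y]

theorem cos_half_sub_mul_sqrt_le_bisector_proj {a b x y : ℝ} (ha : 0 < cos a) (hb : 0 < cos b)
    (hab : 0 ≤ cos ((a - b) / 2)) (hb_le : tan b * x ≤ y) (hle_a : y ≤ tan a * x)
    (hproj : 0 ≤ cos ((a + b) / 2) * x + sin ((a + b) / 2) * y) :
    cos ((a - b) / 2) * √(x ^ 2 + y ^ 2) ≤ cos ((a + b) / 2) * x + sin ((a + b) / 2) * y := by
  rw [tan_mul_le_iff hb] at hb_le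
  rw [le_tan_mul_iff ha] at hle_a
  refine (pow_le_pow_iff_left₀ (by positivity) hproj two_ne_zero).mp ?_
  rw [mul_pow, sq_sqrt (by positivity), ← sub_nonneg, bisector_proj_sq_sub_cos_sq_mul_normSq]
  exact mul_nonneg (by linarith) (by linarith)

theorem concave_quadratic_nonneg_of_endpoints {a b c p q t : ℝ} (ha : a ≤ 0) (hpt : p ≤ t)
    (htq : t ≤ q) (hp : 0 ≤ a * p ^ 2 + b * p + c) (hq : 0 ≤ a * q ^ 2 + b * q + c) :
    0 ≤ a * t ^ 2 + b * t + c := by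
  rcases hpt.eq_or_lt with rfl | hpt
  · exact hp
  refine nonneg_of_mul_nonneg_right (a := q - p) ?_ (by linarith)
  have hbulge : 0 ≤ -a * (q - p) * (t - p) * (q - t) :=
    mul_nonneg (mul_nonneg (mul_nonneg (neg_nonneg.2 ha) (by linarith)) (by linarith))
      (by linarith)
  linear_combination mul_nonneg (sub_nonneg.2 htq) hp + mul_nonneg (sub_nonneg.2 hpt.le) hq
    + hbulge

section

variable {vli vui vlj vuj : ℝ}

theorem ec_bound_le_soc_bound (hvli : 0 ≤ vli) (hvlj : 0 ≤ vlj) (hvj : vlj ≤ vuj) {y : ℝ}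
    (hyl : vli ≤ y) (hyu : y ≤ vui) :
    vlj * (y ^ 2 + vli * vui) ≤ (vli + vui) * vuj * y := by
  have hy : 0 ≤ (y - vli) * (vui - y) := mul_nonneg (by linarith) (by linarith)
  have hσy : 0 ≤ (vli + vui) * y := mul_nonneg (by linarith) (by linarith)
  linear_combination mul_nonneg hvlj hy + mul_nonneg (sub_nonneg.2 hvj) hσy

/-- The left side is `(vli + vui)²` times the left side of `cut_diagonal_nonneg` at
`s = vlj (y² + vli vui) / (vli + vui)`, written in `t = y²`. -/
theorem ec_boundary_nonneg (hvli : 0 ≤ vli) (hvi : vli ≤ vui) (hvlj : 0 ≤ vlj) (hvj : vlj ≤ vuj)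
    {t : ℝ} (htl : vli ^ 2 ≤ t) (htu : t ≤ vui ^ 2) :
    0 ≤ (vli + vui) ^ 2 * (vlj + vuj) * (vlj * (t + vli * vui)) * t
      - vui * (vli + vui) * (vlj * (t + vli * vui)) ^ 2
      - (vli + vui) ^ 2 * (vuj * (vlj + vuj) * t ^ 2 + vui * vuj * (vli * vlj - vui * vuj) * t) := by
  have hvui : 0 ≤ vui := hvli.trans hvi
  have hlead : 0 ≤ (vli + vui) * vuj ^ 2 - vli * vlj ^ 2 := by
    nlinarith [pow_le_pow_left₀ hvlj hvj 2]
  have hfactor : 0 ≤ (vui ^ 2 - t) * ((vli + vui) * ((vli + vui) * vuj ^ 2 - vli * vlj ^ 2)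
      * (t - vli ^ 2) + vli ^ 2 * (vli + vui) ^ 2 * (vuj - vlj) * (vlj + vuj)) :=
    mul_nonneg (by linarith) <| add_nonneg
      (mul_nonneg (mul_nonneg (by positivity) hlead) (by linarith))
      (mul_nonneg (mul_nonneg (by positivity) (by linarith)) (by linarith))
  linear_combination hfactor

theorem cut_diagonal_nonneg (hvli : 0 < vli) (hvi : vli ≤ vui) (hvlj : 0 ≤ vlj) (hvj : vlj ≤ vuj)
    {s y : ℝ} (hyl : vli ≤ y) (hyu : y ≤ vui)
    (hsl : vlj * (y ^ 2 + vli * vui) / (vli + vui) ≤ s) (hsu : s ≤ vuj * y) :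
    0 ≤ (vli + vui) * (vlj + vuj) * s * y ^ 2 - vui * (vli + vui) * s ^ 2
      - vuj * (vlj + vuj) * y ^ 4 - vui * vuj * (vli * vlj - vui * vuj) * y ^ 2 := by
  have hσ : 0 < vli + vui := by linarith
  have hy : 0 ≤ y := hvli.le.trans hyl
  have hvuj : 0 ≤ vuj := hvlj.trans hvj
  have hlower := ec_boundary_nonneg hvli.le hvi hvlj hvj (pow_le_pow_left₀ hvli.le hyl 2)
    (pow_le_pow_left₀ hy hyu 2)
  have hupper : 0 ≤ (vlj + vuj) * vuj * y ^ 2 * ((y - vli) * (vui - y)) :=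
    mul_nonneg (by positivity) (mul_nonneg (by linarith) (by linarith))
  have hquad := concave_quadratic_nonneg_of_endpoints (a := -(vui * (vli + vui)))
    (b := (vli + vui) * (vlj + vuj) * y ^ 2)
    (c := -(vuj * (vlj + vuj) * y ^ 4 + vui * vuj * (vli * vlj - vui * vuj) * y ^ 2))
    (neg_nonpos.2 (mul_nonneg (by linarith) hσ.le)) hsl hsu ?_ ?_
  · linarith [hquad]
  · refine nonneg_of_mul_nonneg_right (hlower.trans_eq ?_) (by positivity : 0 < (vli + vui) ^ 2)
    field_simp
    ring
  · linear_combination hupper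

theorem vub_cut_scaled_nonneg (hvli : 0 < vli) (hvi : vli ≤ vui) (hvlj : 0 ≤ vlj)
    (hvj : vlj ≤ vuj) {c u r y : ℝ} (hc : 0 ≤ c) (hr : 0 ≤ r) (hry : r ≤ vuj * y)
    (hyl : vli ≤ y) (hyu : y ≤ vui) (hur : c * r ≤ u)
    (hec : c * (vlj * (y ^ 2 + vli * vui)) ≤ (vli + vui) * u) :
    0 ≤ (vli + vui) * (vlj + vuj) * u * y ^ 2 - c * (vui * (vli + vui) * r ^ 2
      + vuj * (vlj + vuj) * y ^ 4 + vui * vuj * (vli * vlj - vui * vuj) * y ^ 2) := by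
  have hσ : 0 < vli + vui := by linarith
  have hvuj : 0 ≤ vuj := hvlj.trans hvj
  set m := max r (vlj * (y ^ 2 + vli * vui) / (vli + vui))
  have hmu : c * m ≤ u := by
    rw [mul_max_of_nonneg _ _ hc, mul_div_assoc']
    exact max_le hur ((div_le_iff₀' hσ).2 hec)
  have hm : m ≤ vuj * y := max_le hry <| (div_le_iff₀' hσ).2 <| by
    linarith [ec_bound_le_soc_bound hvli.le hvlj hvj hyl hyu]
  have hdiag := cut_diagonal_nonneg hvli hvi hvlj hvj hyl hyu (le_max_right _ _) hm
  have hrm : 0 ≤ vui * (vli + vui) * (m ^ 2 - r ^ 2) :=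
    mul_nonneg (mul_nonneg (by linarith) hσ.le)
      (sub_nonneg.2 (pow_le_pow_left₀ hr (le_max_left _ _) 2))
  have hum : 0 ≤ (vli + vui) * (vlj + vuj) * y ^ 2 * (u - c * m) :=
    mul_nonneg (by positivity) (sub_nonneg.2 hmu)
  linear_combination hum + mul_nonneg hc hdiag + mul_nonneg hc hrm

end

theorem vub_cut_on_relaxed_set
    (vli vui vlj vuj θl θu φ δ vσi vσj : ℝ)
    (hvli : 0 < vli) (hvi : vli ≤ vui) (hvlj : 0 < vlj) (hvj : vlj ≤ vuj)
    (hθl : -(Real.pi / 2) < θl) (hθ : θl ≤ θu) (hθu : θu < Real.pi / 2)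
    (hφ : φ = (θu + θl) / 2) (hδ : δ = (θu - θl) / 2)
    (hσi : vσi = vli + vui) (hσj : vσj = vlj + vuj)
    (wR wI wi : ℝ)
    (hwil : vli ^ 2 ≤ wi) (hwiu : wi ≤ vui ^ 2)
    (hpadl : Real.tan θl * wR ≤ wI) (hpadu : wI ≤ Real.tan θu * wR)
    (hsoc : wR ^ 2 + wI ^ 2 ≤ wi * vuj ^ 2)
    (hec : vlj * Real.cos δ * wi - vσi * Real.cos φ * wR - vσi * Real.sin φ * wI
      + vli * vui * vlj * Real.cos δ ≤ 0) :
    vσi * vσj * Real.cos φ * wR + vσi * vσj * Real.sin φ * wI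
      + (-(vuj * Real.cos δ * vσj)) * wi
      + (-(vui * Real.cos δ * vσi)) * ((wR ^ 2 + wI ^ 2) / wi)
      + (-(vui * vuj * Real.cos δ * (vli * vlj - vui * vuj))) ≥ 0 := by
  subst hφ hδ hσi hσj
  have hvui : 0 < vui := hvli.trans_le hvi
  have hwi : 0 < wi := (by positivity : 0 < vli ^ 2).trans_le hwil
  have hcδ : 0 < cos ((θu - θl) / 2) := cos_pos_of_mem_Ioo ⟨by linarith, by linarith⟩
  set u := cos ((θu + θl) / 2) * wR + sin ((θu + θl) / 2) * wI
  have hec' : cos ((θu - θl) / 2) * (vlj * (√wi ^ 2 + vli * vui)) ≤ (vli + vui) * u := by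
    rw [sq_sqrt hwi.le]; linarith
  have hu : 0 ≤ u := nonneg_of_mul_nonneg_right
    ((by positivity : (0 : ℝ) ≤ _).trans hec') (by linarith : 0 < vli + vui)
  have hur := cos_half_sub_mul_sqrt_le_bisector_proj (cos_pos_of_mem_Ioo ⟨by linarith, hθu⟩)
    (cos_pos_of_mem_Ioo ⟨hθl, by linarith⟩) hcδ.le hpadl hpadu hu
  have hry : √(wR ^ 2 + wI ^ 2) ≤ vuj * √wi := calc
    √(wR ^ 2 + wI ^ 2) ≤ √(vuj ^ 2 * wi) := sqrt_le_sqrt (by linarith)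
    _ = vuj * √wi := by rw [sqrt_mul (sq_nonneg _), sqrt_sq (by linarith)]
  have key := vub_cut_scaled_nonneg hvli hvi hvlj.le hvj hcδ.le (sqrt_nonneg _) hry
    (le_sqrt_of_sq_le hwil) ((sqrt_le_sqrt hwiu).trans_eq (sqrt_sq hvui.le)) hur hec'
  rw [show √wi ^ 4 = (√wi ^ 2) ^ 2 by ring, sq_sqrt hwi.le,
    sq_sqrt (add_nonneg (sq_nonneg wR) (sq_nonneg wI))] at key
  refine (mul_nonneg_iff_of_pos_right hwi).1 (key.trans_eq ?_)
  rw [div_eq_mul_inv]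
  linear_combination (vui * cos ((θu - θl) / 2) * (vli + vui) * (wR ^ 2 + wI ^ 2))
    * mul_inv_cancel₀ hwi.ne'
end

section
/- (First lifted nonlinear cut, LNC-1.) For all reals v_i, v_j, θ with vl_i ≤ v_i ≤ vu_i, vl_j ≤ v_j ≤ vu_j and θl ≤ θ ≤ θu, setting w_i = v_i², w_j = v_j², wR = v_i·v_j·cos θ and wI = v_i·v_j·sin θ, the following linear inequality holds: vσ_i·vσ_j·(wR·cos φ + wI·sin φ) − vu_j·cos δ·vσ_j·w_i − vu_i·cos δ·vσ_i·w_j ≥ vu_i·vu_j·cos δ·(vl_i·vl_j − vu_i·vu_j). -/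
/-!
Rotating by `φ`, `wR cos φ + wI sin φ = vᵢ vⱼ cos (θ - φ) ≥ vᵢ vⱼ cos δ`, since `|θ - φ| ≤ δ ≤ π/2`.
What remains is `cos δ ≥ 0` times a polynomial inequality on the box `[vlᵢ, vuᵢ] × [vlⱼ, vuⱼ]`,
which holds because the gap is a nonnegative combination of products of distances to the bounds.
-/

open Real

/- The difference of the two sides is `uj (lj + uj) (ui - x)(x - li) + ui (li + ui) (uj - y)(y - lj)
+ (li + ui)(lj + uj)(ui - x)(uj - y)`, a sum of products of nonnegative factors. -/
lemma mul_sub_sq_ge_of_mem_Icc {li ui lj uj x y : ℝ} (hli : 0 ≤ li) (hlj : 0 ≤ lj)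
    (hx₁ : li ≤ x) (hx₂ : x ≤ ui) (hy₁ : lj ≤ y) (hy₂ : y ≤ uj) :
    ui * uj * (li * lj - ui * uj) ≤
      (li + ui) * (lj + uj) * (x * y) - uj * (lj + uj) * x ^ 2 - ui * (li + ui) * y ^ 2 := by
  have hσi : 0 ≤ li + ui := by linarith
  have hσj : 0 ≤ lj + uj := by linarith
  have hx : 0 ≤ (ui - x) * (x - li) := mul_nonneg (by linarith) (by linarith)
  have hy : 0 ≤ (uj - y) * (y - lj) := mul_nonneg (by linarith) (by linarith)
  have hxy : 0 ≤ (ui - x) * (uj - y) := mul_nonneg (by linarith) (by linarith)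
  have h₁ := mul_nonneg (mul_nonneg (by linarith : 0 ≤ uj) hσj) hx
  have h₂ := mul_nonneg (mul_nonneg (by linarith : 0 ≤ ui) hσi) hy
  have h₃ := mul_nonneg (mul_nonneg hσi hσj) hxy
  linear_combination h₁ + h₂ + h₃

lemma cos_half_sub_le_cos_sub_midpoint {a b θ : ℝ} (ha : a ≤ θ) (hb : θ ≤ b)
    (hba : b - a ≤ 2 * π) : cos ((b - a) / 2) ≤ cos (θ - (b + a) / 2) := by
  rw [← cos_abs (θ - _)]
  refine cos_le_cos_of_nonneg_of_le_pi (abs_nonneg _) (by linarith) ?_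
  rw [abs_le]
  constructor <;> linarith

theorem lifted_nonlinear_cut_one_valid_general
    (vli vui vlj vuj θl θu φ δ vσi vσj : ℝ)
    (hvli : 0 < vli) (hvi : vli ≤ vui) (hvlj : 0 < vlj) (hvj : vlj ≤ vuj)
    (hθl : -(Real.pi / 2) ≤ θl) (hθu : θu ≤ Real.pi / 2)
    (hφ : φ = (θu + θl) / 2) (hδ : δ = (θu - θl) / 2)
    (hσi : vσi = vli + vui) (hσj : vσj = vlj + vuj) :
    ∀ vi vj θ : ℝ, vli ≤ vi → vi ≤ vui → vlj ≤ vj → vj ≤ vuj → θl ≤ θ → θ ≤ θu →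
      vσi * vσj * ((vi * vj * Real.cos θ) * Real.cos φ + (vi * vj * Real.sin θ) * Real.sin φ)
        - vuj * Real.cos δ * vσj * vi ^ 2 - vui * Real.cos δ * vσi * vj ^ 2
        ≥ vui * vuj * Real.cos δ * (vli * vlj - vui * vuj) := by
  intro vi vj θ hvi₁ hvi₂ hvj₁ hvj₂ hθ₁ hθ₂
  have hrot : vi * vj * cos θ * cos φ + vi * vj * sin θ * sin φ = vi * vj * cos (θ - φ) := by
    rw [cos_sub]; ring
  have hcos : cos δ ≤ cos (θ - φ) := by
    subst hφ hδ
    exact cos_half_sub_le_cos_sub_midpoint hθ₁ hθ₂ (by linarith [pi_pos])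
  have hcosδ : 0 ≤ cos δ := cos_nonneg_of_mem_Icc ⟨by linarith, by linarith⟩
  have hpoly := mul_sub_sq_ge_of_mem_Icc hvli.le hvlj.le hvi₁ hvi₂ hvj₁ hvj₂
  have hweight : 0 ≤ vσi * vσj * (vi * vj) := by
    have hσi₀ : 0 ≤ vσi := by linarith
    have hσj₀ : 0 ≤ vσj := by linarith
    exact mul_nonneg (mul_nonneg hσi₀ hσj₀) (mul_nonneg (hvli.le.trans hvi₁) (hvlj.le.trans hvj₁))
  rw [hrot]
  subst hσi hσj
  linear_combination cos δ * hpoly + mul_le_mul_of_nonneg_left hcos hweight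

theorem lifted_nonlinear_cut_one_valid
    (vli vui vlj vuj θl θu φ δ vσi vσj : ℝ)
    (hvli : 0 < vli) (hvi : vli ≤ vui) (hvlj : 0 < vlj) (hvj : vlj ≤ vuj)
    (hθl : -(Real.pi / 2) ≤ θl) (hθ : θl ≤ θu) (hθu : θu ≤ Real.pi / 2)
    (hφ : φ = (θu + θl) / 2) (hδ : δ = (θu - θl) / 2)
    (hσi : vσi = vli + vui) (hσj : vσj = vlj + vuj) :
    ∀ vi vj θ : ℝ, vli ≤ vi → vi ≤ vui → vlj ≤ vj → vj ≤ vuj → θl ≤ θ → θ ≤ θu →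
      vσi * vσj * ((vi * vj * Real.cos θ) * Real.cos φ + (vi * vj * Real.sin θ) * Real.sin φ)
        - vuj * Real.cos δ * vσj * vi ^ 2 - vui * Real.cos δ * vσi * vj ^ 2
        ≥ vui * vuj * Real.cos δ * (vli * vlj - vui * vuj) :=
  lifted_nonlinear_cut_one_valid_general vli vui vlj vuj θl θu φ δ vσi vσj hvli hvi hvlj hvj hθl hθu
    hφ hδ hσi hσj
end

section
/- (Second lifted nonlinear cut, LNC-2.) For all reals v_i, v_j, θ with vl_i ≤ v_i ≤ vu_i, vl_j ≤ v_j ≤ vu_j and θl ≤ θ ≤ θu, setting w_i = v_i², w_j = v_j², wR = v_i·v_j·cos θ and wI = v_i·v_j·sin θ, the following linear inequality holds: vσ_i·vσ_j·(wR·cos φ + wI·sin φ) − vl_j·cos δ·vσ_j·w_i − vl_i·cos δ·vσ_i·w_j ≥ −vl_i·vl_j·cos δ·(vl_i·vl_j − vu_i·vu_j). -/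
/-! `wR cos φ + wI sin φ = v_i v_j cos (θ - φ)` and `|θ - φ| ≤ δ ≤ π/2`, so this term is at least
`v_i v_j cos δ` with `cos δ ≥ 0`. Factoring out `cos δ` leaves a polynomial inequality on the box
`[vl_i, vu_i] × [vl_j, vu_j]`, which is a sum of products of nonnegative box constraints. -/

open Real

/- The gap is exactly the sum of the three nonnegative products `hx`, `hy`, `hxy`. -/
theorem box_mul_sub_sq_bound {a A b B x y : ℝ} (ha : 0 ≤ a) (hb : 0 ≤ b)
    (hax : a ≤ x) (hxA : x ≤ A) (hby : b ≤ y) (hyB : y ≤ B) :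
    -(a * b * (a * b - A * B))
      ≤ (a + A) * (b + B) * (x * y) - b * (b + B) * x ^ 2 - a * (a + A) * y ^ 2 := by
  have hsa : 0 ≤ a + A := by linarith
  have hsb : 0 ≤ b + B := by linarith
  have hx : 0 ≤ b * (b + B) * ((x - a) * (A - x)) :=
    mul_nonneg (mul_nonneg hb hsb) (mul_nonneg (by linarith) (by linarith))
  have hy : 0 ≤ a * (a + A) * ((y - b) * (B - y)) :=
    mul_nonneg (mul_nonneg ha hsa) (mul_nonneg (by linarith) (by linarith))
  have hxy : 0 ≤ (a + A) * (b + B) * ((x - a) * (y - b)) :=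
    mul_nonneg (mul_nonneg hsa hsb) (mul_nonneg (by linarith) (by linarith))
  linear_combination hx + hy + hxy

theorem cos_half_width_le_cos_sub_midpoint {l u θ : ℝ} (hl : l ≤ θ) (hu : θ ≤ u)
    (hw : u - l ≤ 2 * π) :
    cos ((u - l) / 2) ≤ cos (θ - (u + l) / 2) := by
  rw [← cos_abs (θ - (u + l) / 2)]
  exact cos_le_cos_of_nonneg_of_le_pi (abs_nonneg _) (by linarith)
    (abs_le.mpr ⟨by linarith, by linarith⟩)

theorem lifted_nonlinear_cut_two_valid_general
    (vli vui vlj vuj θl θu φ δ vσi vσj : ℝ)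
    (hvli : 0 < vli) (hvlj : 0 < vlj)
    (hθl : -(Real.pi / 2) ≤ θl) (hθu : θu ≤ Real.pi / 2)
    (hφ : φ = (θu + θl) / 2) (hδ : δ = (θu - θl) / 2)
    (hσi : vσi = vli + vui) (hσj : vσj = vlj + vuj) :
    ∀ vi vj θ : ℝ, vli ≤ vi → vi ≤ vui → vlj ≤ vj → vj ≤ vuj → θl ≤ θ → θ ≤ θu →
      vσi * vσj * ((vi * vj * Real.cos θ) * Real.cos φ + (vi * vj * Real.sin θ) * Real.sin φ)
        - vlj * Real.cos δ * vσj * vi ^ 2 - vli * Real.cos δ * vσi * vj ^ 2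
        ≥ -(vli * vlj * Real.cos δ * (vli * vlj - vui * vuj)) := by
  intro vi vj θ hli hui hlj huj hθl' hθu'
  subst hφ hδ hσi hσj
  have hcos := cos_half_width_le_cos_sub_midpoint hθl' hθu' (by linarith)
  rw [cos_sub] at hcos
  have hcos_nonneg : 0 ≤ cos ((θu - θl) / 2) := cos_nonneg_of_mem_Icc ⟨by linarith, by linarith⟩
  have hweight : 0 ≤ (vli + vui) * (vlj + vuj) * (vi * vj) :=
    mul_nonneg (mul_nonneg (by linarith) (by linarith)) (mul_nonneg (by linarith) (by linarith))
  have hpoly := box_mul_sub_sq_bound hvli.le hvlj.le hli hui hlj huj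
  linear_combination mul_le_mul_of_nonneg_left hpoly hcos_nonneg
    + mul_le_mul_of_nonneg_left hcos hweight

theorem lifted_nonlinear_cut_two_valid
    (vli vui vlj vuj θl θu φ δ vσi vσj : ℝ)
    (hvli : 0 < vli) (hvi : vli ≤ vui) (hvlj : 0 < vlj) (hvj : vlj ≤ vuj)
    (hθl : -(Real.pi / 2) ≤ θl) (hθ : θl ≤ θu) (hθu : θu ≤ Real.pi / 2)
    (hφ : φ = (θu + θl) / 2) (hδ : δ = (θu - θl) / 2)
    (hσi : vσi = vli + vui) (hσj : vσj = vlj + vuj) :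
    ∀ vi vj θ : ℝ, vli ≤ vi → vi ≤ vui → vlj ≤ vj → vj ≤ vuj → θl ≤ θ → θ ≤ θu →
      vσi * vσj * ((vi * vj * Real.cos θ) * Real.cos φ + (vi * vj * Real.sin θ) * Real.sin φ)
        - vlj * Real.cos δ * vσj * vi ^ 2 - vli * Real.cos δ * vσi * vj ^ 2
        ≥ -(vli * vlj * Real.cos δ * (vli * vlj - vui * vuj)) :=
  lifted_nonlinear_cut_two_valid_general vli vui vlj vuj θl θu φ δ vσi vσj hvli hvlj hθl hθu hφ hδ
    hσi hσj
end

section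
/- (LNC dominates the first Extreme cut.) Let wR, wI, w_i, w_j be arbitrary real numbers satisfying w_j ≥ (vl_j)² and the lifted nonlinear cut vσ_i·vσ_j·(wR·cos φ + wI·sin φ) − vl_j·cos δ·vσ_j·w_i − vl_i·cos δ·vσ_i·w_j ≥ −vl_i·vl_j·cos δ·(vl_i·vl_j − vu_i·vu_j). Then the Extreme cut vl_j·cos δ·w_i − vσ_i·cos φ·wR − vσ_i·sin φ·wI + vl_i·vu_i·vl_j·cos δ ≤ 0 also holds. -/
/-! Multiplying the Extreme cut by `vσ_j > 0` and adding the slack of the lifted nonlinear cut leaves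
exactly `vl_i · cos δ · vσ_i · (vl_j² − w_j)`, a nonnegative multiple of `vl_j² − w_j ≤ 0`. -/

open Real

lemma cos_half_sub_nonneg {θl θu : ℝ} (hθl : -(π / 2) ≤ θl) (hθ : θl ≤ θu) (hθu : θu ≤ π / 2) :
    0 ≤ cos ((θu - θl) / 2) :=
  cos_nonneg_of_mem_Icc ⟨by linarith [pi_pos], by linarith⟩

lemma extreme_cut_nonpos_of_lnc {vli vui vlj vuj c p q wR wI wi wj : ℝ}
    (hvli : 0 ≤ vli) (hσi : 0 ≤ vli + vui) (hσj : 0 < vlj + vuj) (hc : 0 ≤ c)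
    (hwj : vlj ^ 2 ≤ wj)
    (hlnc : -(vli * vlj * c * (vli * vlj - vui * vuj)) ≤
      (vli + vui) * (vlj + vuj) * (wR * p + wI * q)
        - vlj * c * (vlj + vuj) * wi - vli * c * (vli + vui) * wj) :
    vlj * c * wi - (vli + vui) * p * wR - (vli + vui) * q * wI + vli * vui * vlj * c ≤ 0 := by
  have hdefect : vli * c * (vli + vui) * (vlj ^ 2 - wj) ≤ 0 :=
    mul_nonpos_of_nonneg_of_nonpos (mul_nonneg (mul_nonneg hvli hc) hσi) (by linarith)
  refine nonpos_of_mul_nonpos_left ?_ hσj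
  linear_combination hlnc + hdefect

theorem lnc_dominates_first_extreme_cut_general
    (vli vui vlj vuj θl θu φ δ vσi vσj : ℝ)
    (hvli : 0 < vli) (hvi : vli ≤ vui) (hvlj : 0 < vlj) (hvj : vlj ≤ vuj)
    (hθl : -(Real.pi / 2) ≤ θl) (hθ : θl ≤ θu) (hθu : θu ≤ Real.pi / 2)
    (hδ : δ = (θu - θl) / 2)
    (hσi : vσi = vli + vui) (hσj : vσj = vlj + vuj)
    (wR wI wi wj : ℝ)
    (hwj : wj ≥ vlj ^ 2)
    (hlnc : vσi * vσj * (wR * Real.cos φ + wI * Real.sin φ)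
      - vlj * Real.cos δ * vσj * wi - vli * Real.cos δ * vσi * wj
      ≥ -(vli * vlj * Real.cos δ * (vli * vlj - vui * vuj))) :
    vlj * Real.cos δ * wi - vσi * Real.cos φ * wR - vσi * Real.sin φ * wI
      + vli * vui * vlj * Real.cos δ ≤ 0 := by
  subst hσi hσj
  exact extreme_cut_nonpos_of_lnc hvli.le (by linarith) (by linarith)
    (hδ ▸ cos_half_sub_nonneg hθl hθ hθu) hwj hlnc

theorem lnc_dominates_first_extreme_cut
    (vli vui vlj vuj θl θu φ δ vσi vσj : ℝ)
    (hvli : 0 < vli) (hvi : vli ≤ vui) (hvlj : 0 < vlj) (hvj : vlj ≤ vuj)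
    (hθl : -(Real.pi / 2) ≤ θl) (hθ : θl ≤ θu) (hθu : θu ≤ Real.pi / 2)
    (hφ : φ = (θu + θl) / 2) (hδ : δ = (θu - θl) / 2)
    (hσi : vσi = vli + vui) (hσj : vσj = vlj + vuj)
    (wR wI wi wj : ℝ)
    (hwj : wj ≥ vlj ^ 2)
    (hlnc : vσi * vσj * (wR * Real.cos φ + wI * Real.sin φ)
      - vlj * Real.cos δ * vσj * wi - vli * Real.cos δ * vσi * wj
      ≥ -(vli * vlj * Real.cos δ * (vli * vlj - vui * vuj))) :
    vlj * Real.cos δ * wi - vσi * Real.cos φ * wR - vσi * Real.sin φ * wI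
      + vli * vui * vlj * Real.cos δ ≤ 0 :=
  lnc_dominates_first_extreme_cut_general vli vui vlj vuj θl θu φ δ vσi vσj hvli hvi hvlj hvj hθl hθ
    hθu hδ hσi hσj wR wI wi wj hwj hlnc
end

section
/- (LNC dominates the bound-based cut.) Let wR, wI, w_i, w_j be arbitrary real numbers satisfying w_i ≥ (vl_i)², w_j ≥ (vl_j)², and the lifted nonlinear cut vσ_i·vσ_j·(wR·cos φ + wI·sin φ) − vl_j·cos δ·vσ_j·w_i − vl_i·cos δ·vσ_i·w_j ≥ −vl_i·vl_j·cos δ·(vl_i·vl_j − vu_i·vu_j). Then wR·cos φ + wI·sin φ ≥ vl_i·vl_j·cos δ. -/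
/-!
Write `S = wR cos φ + wI sin φ` and `c = cos δ ≥ 0`. Since the coefficients of `w_i` and `w_j` in the
cut are nonpositive, replacing `w_i, w_j` by their lower bounds `vl_i², vl_j²` keeps the cut valid,
and at these values its right-hand side becomes exactly `vσ_i vσ_j · vl_i vl_j c`. Dividing by
`vσ_i vσ_j > 0` gives `S ≥ vl_i vl_j c`.
-/

open Real

lemma lifted_cut_at_lower_bounds (a A b B c : ℝ) :
    b * c * (b + B) * a ^ 2 + a * c * (a + A) * b ^ 2 - a * b * c * (a * b - A * B)
      = (a + A) * (b + B) * (a * b * c) := by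
  ring

lemma le_of_lifted_cut {a A b B c S wi wj : ℝ} (ha : 0 ≤ a) (hb : 0 ≤ b) (hc : 0 ≤ c)
    (hσa : 0 < a + A) (hσb : 0 < b + B) (hwi : a ^ 2 ≤ wi) (hwj : b ^ 2 ≤ wj)
    (hcut : -(a * b * c * (a * b - A * B))
      ≤ (a + A) * (b + B) * S - b * c * (b + B) * wi - a * c * (a + A) * wj) :
    a * b * c ≤ S := by
  have hwi' : b * c * (b + B) * a ^ 2 ≤ b * c * (b + B) * wi := by gcongr
  have hwj' : a * c * (a + A) * b ^ 2 ≤ a * c * (a + A) * wj := by gcongr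
  have key : (a + A) * (b + B) * (a * b * c) ≤ (a + A) * (b + B) * S := by
    rw [← lifted_cut_at_lower_bounds]
    linarith
  exact le_of_mul_le_mul_left key (mul_pos hσa hσb)

theorem lnc_dominates_bound_cut_general
    (vli vui vlj vuj θl θu φ δ vσi vσj : ℝ)
    (hvli : 0 < vli) (hvi : vli ≤ vui) (hvlj : 0 < vlj) (hvj : vlj ≤ vuj)
    (hθl : -(Real.pi / 2) ≤ θl) (hθ : θl ≤ θu) (hθu : θu ≤ Real.pi / 2)
    (hδ : δ = (θu - θl) / 2)
    (hσi : vσi = vli + vui) (hσj : vσj = vlj + vuj)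
    (wR wI wi wj : ℝ)
    (hwi : wi ≥ vli ^ 2) (hwj : wj ≥ vlj ^ 2)
    (hlnc : vσi * vσj * (wR * Real.cos φ + wI * Real.sin φ)
      - vlj * Real.cos δ * vσj * wi - vli * Real.cos δ * vσi * wj
      ≥ -(vli * vlj * Real.cos δ * (vli * vlj - vui * vuj))) :
    wR * Real.cos φ + wI * Real.sin φ ≥ vli * vlj * Real.cos δ := by
  subst hσi hσj
  have hc : 0 ≤ cos δ := hδ ▸ cos_half_sub_nonneg hθl hθ hθu
  exact le_of_lifted_cut hvli.le hvlj.le hc (by linarith) (by linarith) hwi hwj hlnc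

theorem lnc_dominates_bound_cut
    (vli vui vlj vuj θl θu φ δ vσi vσj : ℝ)
    (hvli : 0 < vli) (hvi : vli ≤ vui) (hvlj : 0 < vlj) (hvj : vlj ≤ vuj)
    (hθl : -(Real.pi / 2) ≤ θl) (hθ : θl ≤ θu) (hθu : θu ≤ Real.pi / 2)
    (hφ : φ = (θu + θl) / 2) (hδ : δ = (θu - θl) / 2)
    (hσi : vσi = vli + vui) (hσj : vσj = vlj + vuj)
    (wR wI wi wj : ℝ)
    (hwi : wi ≥ vli ^ 2) (hwj : wj ≥ vlj ^ 2)
    (hlnc : vσi * vσj * (wR * Real.cos φ + wI * Real.sin φ)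
      - vlj * Real.cos δ * vσj * wi - vli * Real.cos δ * vσi * wj
      ≥ -(vli * vlj * Real.cos δ * (vli * vlj - vui * vuj))) :
    wR * Real.cos φ + wI * Real.sin φ ≥ vli * vlj * Real.cos δ :=
  lnc_dominates_bound_cut_general vli vui vlj vuj θl θu φ δ vσi vσj hvli hvi hvlj hvj hθl hθ hθu hδ
    hσi hσj wR wI wi wj hwi hwj hlnc
end

section
/- Let θl, θu ∈ (−π/2, π/2) with θl ≠ 0 and θu ≠ 0, and set φ = (θu + θl)/2, δ = (θu − θl)/2. Define r(t) = (√(1 + t²) − 1)/t for nonzero real t. Then (1 − r(tan θl)·r(tan θu)) / (1 + r(tan θl)·r(tan θu)) = cos φ / cos δ. -/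
/-! The map `r ∘ tan` is the half-angle tangent, `r (tan θ) = tan (θ / 2)`, and multiplying
numerator and denominator by `cos a * cos b` turns `(1 - tan a * tan b) / (1 + tan a * tan b)`
into `cos (a + b) / cos (a - b)`; with `a = θl / 2`, `b = θu / 2` this is `cos φ / cos δ`. -/

open Real

namespace Real

theorem tan_half_eq_one_sub_cos_div_sin (x : ℝ) : tan (x / 2) = (1 - cos x) / sin x := by
  obtain ⟨y, rfl⟩ : ∃ y, x = 2 * y := ⟨x / 2, by ring⟩
  rw [mul_div_cancel_left₀ y two_ne_zero, tan_eq_sin_div_cos, sin_two_mul, cos_two_mul_eq_one_sub]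
  by_cases hc : cos y = 0
  · simp [hc]
  by_cases hs : sin y = 0
  · simp [hs]
  field_simp
  ring

theorem sqrt_one_add_tan_sq_sub_one_div_tan {x : ℝ} (hx : 0 < cos x) :
    (√(1 + tan x ^ 2) - 1) / tan x = tan (x / 2) := by
  have hsqrt : √(1 + tan x ^ 2) = (cos x)⁻¹ :=
    inv_eq_iff_eq_inv.mp (inv_sqrt_one_add_tan_sq hx)
  rw [tan_half_eq_one_sub_cos_div_sin, hsqrt, tan_eq_sin_div_cos, div_div_eq_mul_div]
  congr 1
  field_simp

theorem one_sub_tan_mul_tan_div_one_add_tan_mul_tan {a b : ℝ} (ha : cos a ≠ 0)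
    (hb : cos b ≠ 0) :
    (1 - tan a * tan b) / (1 + tan a * tan b) = cos (a + b) / cos (a - b) := by
  have hsub : 1 - tan a * tan b = cos (a + b) / (cos a * cos b) := by
    rw [cos_add, tan_eq_sin_div_cos, tan_eq_sin_div_cos]
    field_simp
  have hadd : 1 + tan a * tan b = cos (a - b) / (cos a * cos b) := by
    rw [cos_sub, tan_eq_sin_div_cos, tan_eq_sin_div_cos]
    field_simp
  rw [hsub, hadd, div_div_div_cancel_right₀ (mul_ne_zero ha hb)]

end Real

theorem qcqp_coefficient_cos_general
    (θl θu φ δ : ℝ)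
    (hθl1 : -(Real.pi / 2) < θl) (hθl2 : θl < Real.pi / 2)
    (hθu1 : -(Real.pi / 2) < θu) (hθu2 : θu < Real.pi / 2)
    (hφ : φ = (θu + θl) / 2) (hδ : δ = (θu - θl) / 2) :
    (1 - ((Real.sqrt (1 + Real.tan θl ^ 2) - 1) / Real.tan θl) *
          ((Real.sqrt (1 + Real.tan θu ^ 2) - 1) / Real.tan θu)) /
      (1 + ((Real.sqrt (1 + Real.tan θl ^ 2) - 1) / Real.tan θl) *
          ((Real.sqrt (1 + Real.tan θu ^ 2) - 1) / Real.tan θu))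
      = Real.cos φ / Real.cos δ := by
  have hl : 0 < cos (θl / 2) := cos_pos_of_mem_Ioo ⟨by linarith, by linarith⟩
  have hu : 0 < cos (θu / 2) := cos_pos_of_mem_Ioo ⟨by linarith, by linarith⟩
  rw [sqrt_one_add_tan_sq_sub_one_div_tan (cos_pos_of_mem_Ioo ⟨hθl1, hθl2⟩),
    sqrt_one_add_tan_sq_sub_one_div_tan (cos_pos_of_mem_Ioo ⟨hθu1, hθu2⟩),
    one_sub_tan_mul_tan_div_one_add_tan_mul_tan hl.ne' hu.ne', ← cos_neg (θl / 2 - θu / 2),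
    hφ, hδ]
  congr 2 <;> ring

theorem qcqp_coefficient_cos
    (θl θu φ δ : ℝ)
    (hθl1 : -(Real.pi / 2) < θl) (hθl2 : θl < Real.pi / 2) (hθl0 : θl ≠ 0)
    (hθu1 : -(Real.pi / 2) < θu) (hθu2 : θu < Real.pi / 2) (hθu0 : θu ≠ 0)
    (hφ : φ = (θu + θl) / 2) (hδ : δ = (θu - θl) / 2) :
    (1 - ((Real.sqrt (1 + Real.tan θl ^ 2) - 1) / Real.tan θl) *
          ((Real.sqrt (1 + Real.tan θu ^ 2) - 1) / Real.tan θu)) /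
      (1 + ((Real.sqrt (1 + Real.tan θl ^ 2) - 1) / Real.tan θl) *
          ((Real.sqrt (1 + Real.tan θu ^ 2) - 1) / Real.tan θu))
      = Real.cos φ / Real.cos δ :=
  qcqp_coefficient_cos_general θl θu φ δ hθl1 hθl2 hθu1 hθu2 hφ hδ
end

section
/- (Equivalence of the first Chen–Atamtürk–Oren cut with LNC-1.) Define π0 = −vl_i·vl_j·vu_i·vu_j, π1 = −vl_j·vu_j, π2 = −vl_i·vu_i, π3 = vσ_i·vσ_j·cos φ / cos δ, π4 = vσ_i·vσ_j·sin φ / cos δ, and assume cos δ > 0. Then for all real wR, wI, w_i, w_j, the inequality π3·wR + π4·wI + (π1 − (vu_j)²)·w_i + (π2 − (vu_i)²)·w_j ≥ −(π0 + (vu_i)²·(vu_j)²) holds if and only if vσ_i·vσ_j·(wR·cos φ + wI·sin φ) − vu_j·cos δ·vσ_j·w_i − vu_i·cos δ·vσ_i·w_j ≥ vu_i·vu_j·cos δ·(vl_i·vl_j − vu_i·vu_j). -/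
open Real

/-!
The cut is LNC-1 divided by `cos δ > 0`: multiplying it by `cos δ` clears the denominators of
`π3, π4`, and the remaining coefficients factor as `vlⱼ vuⱼ + vuⱼ² = vuⱼ vσⱼ` and
`vlᵢ vlⱼ vuᵢ vuⱼ - vuᵢ² vuⱼ² = vuᵢ vuⱼ (vlᵢ vlⱼ - vuᵢ vuⱼ)`.
-/

lemma cutOne_lhs_mul_eq_lncOne_lhs (vli vui vlj vuj c s d wR wI wi wj : ℝ) (hd : d ≠ 0) :
    ((vli + vui) * (vlj + vuj) * c / d * wR + (vli + vui) * (vlj + vuj) * s / d * wI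
        + (-(vlj * vuj) - vuj ^ 2) * wi + (-(vli * vui) - vui ^ 2) * wj) * d
      = (vli + vui) * (vlj + vuj) * (wR * c + wI * s)
        - vuj * d * (vlj + vuj) * wi - vui * d * (vli + vui) * wj := by
  field_simp
  ring

lemma cutOne_rhs_mul_eq_lncOne_rhs (vli vui vlj vuj d : ℝ) :
    -(-(vli * vlj * vui * vuj) + vui ^ 2 * vuj ^ 2) * d
      = vui * vuj * d * (vli * vlj - vui * vuj) := by
  ring

theorem cao_cut_one_equiv_lnc_one_general
    (vli vui vlj vuj φ δ vσi vσj π0 π1 π2 π3 π4 : ℝ)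
    (hσi : vσi = vli + vui) (hσj : vσj = vlj + vuj)
    (hcosδ : 0 < Real.cos δ)
    (hπ0 : π0 = -(vli * vlj * vui * vuj)) (hπ1 : π1 = -(vlj * vuj)) (hπ2 : π2 = -(vli * vui))
    (hπ3 : π3 = vσi * vσj * Real.cos φ / Real.cos δ)
    (hπ4 : π4 = vσi * vσj * Real.sin φ / Real.cos δ) :
    ∀ wR wI wi wj : ℝ,
      (π3 * wR + π4 * wI + (π1 - vuj ^ 2) * wi + (π2 - vui ^ 2) * wj
        ≥ -(π0 + vui ^ 2 * vuj ^ 2))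
      ↔ (vσi * vσj * (wR * Real.cos φ + wI * Real.sin φ)
        - vuj * Real.cos δ * vσj * wi - vui * Real.cos δ * vσi * wj
        ≥ vui * vuj * Real.cos δ * (vli * vlj - vui * vuj)) := by
  intro wR wI wi wj
  subst hσi hσj hπ0 hπ1 hπ2 hπ3 hπ4
  rw [ge_iff_le, ge_iff_le, ← mul_le_mul_iff_of_pos_right hcosδ,
    cutOne_lhs_mul_eq_lncOne_lhs _ _ _ _ _ _ _ _ _ _ _ hcosδ.ne',
    cutOne_rhs_mul_eq_lncOne_rhs]

theorem cao_cut_one_equiv_lnc_one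
    (vli vui vlj vuj θl θu φ δ vσi vσj π0 π1 π2 π3 π4 : ℝ)
    (hvli : 0 < vli) (hvi : vli ≤ vui) (hvlj : 0 < vlj) (hvj : vlj ≤ vuj)
    (hθl : -(Real.pi / 2) ≤ θl) (hθ : θl ≤ θu) (hθu : θu ≤ Real.pi / 2)
    (hφ : φ = (θu + θl) / 2) (hδ : δ = (θu - θl) / 2)
    (hσi : vσi = vli + vui) (hσj : vσj = vlj + vuj)
    (hcosδ : 0 < Real.cos δ)
    (hπ0 : π0 = -(vli * vlj * vui * vuj)) (hπ1 : π1 = -(vlj * vuj)) (hπ2 : π2 = -(vli * vui))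
    (hπ3 : π3 = vσi * vσj * Real.cos φ / Real.cos δ)
    (hπ4 : π4 = vσi * vσj * Real.sin φ / Real.cos δ) :
    ∀ wR wI wi wj : ℝ,
      (π3 * wR + π4 * wI + (π1 - vuj ^ 2) * wi + (π2 - vui ^ 2) * wj
        ≥ -(π0 + vui ^ 2 * vuj ^ 2))
      ↔ (vσi * vσj * (wR * Real.cos φ + wI * Real.sin φ)
        - vuj * Real.cos δ * vσj * wi - vui * Real.cos δ * vσi * wj
        ≥ vui * vuj * Real.cos δ * (vli * vlj - vui * vuj)) :=
  cao_cut_one_equiv_lnc_one_general vli vui vlj vuj φ δ vσi vσj π0 π1 π2 π3 π4 hσi hσj hcosδ hπ0 hπ1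
    hπ2 hπ3 hπ4
end
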